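/- Let R, R' be conditionally independent given X with common selection probability p(x) = logistic(ψ₀+ψ₁x), and suppose X | R=1, R'=1 ~ N(μ,σ²). Then for r, r' ∈ {0,1}, the conditional distribution of X given R=r, R'=r' is N(μ + ψ₁(r+r'−2)σ², σ²). -/

import Mathlib

open MeasureTheory Real

noncomputable def normalPDF (μ σ2 x : ℝ) : ℝ :=
  (Real.sqrt (2 * Real.pi * σ2))⁻¹ * Real.exp (-(x - μ)^2 / (2 * σ2))

noncomputable def logisticSel (ψ0 ψ1 x : ℝ) : ℝ :=
  Real.exp (ψ0 + ψ1 * x) / (1 + Real.exp (ψ0 + ψ1 * x))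

noncomputable def selWeight (ψ0 ψ1 : ℝ) (r x : ℝ) : ℝ :=
  if r = 1 then logisticSel ψ0 ψ1 x else 1 - logisticSel ψ0 ψ1 x

/-!
Writing `p = logisticSel ψ0 ψ1`, one has `1 - p x = p x * exp (-(ψ0 + ψ1 x))`, so for `r, r' ∈ {0, 1}`
the numerator of the conditional density given `R = r, R' = r'` is that given `R = R' = 1` times
`exp ((r + r' - 2) (ψ0 + ψ1 x))`. An exponential tilt `e^{a x}` of the `N(μ, σ²)` density is a
constant multiple of the `N(μ + a σ², σ²)` density, and normalising removes the constant.
-/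

lemma normalPDF_eq_gaussianPDFReal (μ σ2 : ℝ) (hσ2 : 0 ≤ σ2) :
    normalPDF μ σ2 = ProbabilityTheory.gaussianPDFReal μ ⟨σ2, hσ2⟩ := by
  funext x
  simp only [normalPDF, neg_div, ProbabilityTheory.gaussianPDFReal]
  rfl

lemma integral_normalPDF (μ : ℝ) {σ2 : ℝ} (hσ2 : 0 < σ2) : ∫ x, normalPDF μ σ2 x = 1 := by
  rw [normalPDF_eq_gaussianPDFReal μ σ2 hσ2.le]
  exact ProbabilityTheory.integral_gaussianPDFReal_eq_one μ
    (fun h ↦ hσ2.ne' (congrArg NNReal.toReal h))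

lemma normalPDF_mul_exp (μ σ2 a x : ℝ) :
    normalPDF μ σ2 x * exp (a * x) =
      exp (a * μ + a ^ 2 * σ2 / 2) * normalPDF (μ + a * σ2) σ2 x := by
  rcases eq_or_ne σ2 0 with rfl | hσ2
  · simp [normalPDF]
  have hexp : exp (-(x - μ) ^ 2 / (2 * σ2)) * exp (a * x) =
      exp (a * μ + a ^ 2 * σ2 / 2) * exp (-(x - (μ + a * σ2)) ^ 2 / (2 * σ2)) := by
    rw [← exp_add, ← exp_add]
    congr 1
    field_simp
    ring
  simp only [normalPDF]
  linear_combination (sqrt (2 * π * σ2))⁻¹ * hexp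

lemma div_integral_eq_normalPDF_of_eq_mul_exp {g : ℝ → ℝ} {μ σ2 K b a : ℝ} (hσ2 : 0 < σ2)
    (hK : K ≠ 0) (hg : ∀ x, g x = K * normalPDF μ σ2 x * exp (b + a * x)) (x : ℝ) :
    g x / ∫ y, g y = normalPDF (μ + a * σ2) σ2 x := by
  set C := K * exp b * exp (a * μ + a ^ 2 * σ2 / 2)
  have hC : C ≠ 0 := by positivity
  have hg' : ∀ y, g y = C * normalPDF (μ + a * σ2) σ2 y := fun y ↦ by
    rw [hg y, exp_add]
    linear_combination K * exp b * normalPDF_mul_exp μ σ2 a y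
  have hint : ∫ y, g y = C := by
    simp only [hg', integral_const_mul, integral_normalPDF _ hσ2, mul_one]
  rw [hint, hg', mul_div_cancel_left₀ _ hC]

lemma selWeight_one (ψ0 ψ1 x : ℝ) : selWeight ψ0 ψ1 1 x = logisticSel ψ0 ψ1 x := by
  simp [selWeight]

lemma selWeight_eq_logisticSel_mul_exp (ψ0 ψ1 : ℝ) {r : ℝ} (hr : r = 0 ∨ r = 1) (x : ℝ) :
    selWeight ψ0 ψ1 r x = logisticSel ψ0 ψ1 x * exp ((r - 1) * (ψ0 + ψ1 * x)) := by
  rcases hr with rfl | rfl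
  · have hpos : 0 < 1 + exp (ψ0 + ψ1 * x) := by positivity
    simp only [selWeight, zero_ne_one, if_false, logisticSel, zero_sub, neg_one_mul, exp_neg]
    field_simp
    ring
  · simp [selWeight_one]

lemma selWeight_mul_selWeight (ψ0 ψ1 : ℝ) {r r' : ℝ} (hr : r = 0 ∨ r = 1)
    (hr' : r' = 0 ∨ r' = 1) (x : ℝ) :
    selWeight ψ0 ψ1 r x * selWeight ψ0 ψ1 r' x =
      selWeight ψ0 ψ1 1 x * selWeight ψ0 ψ1 1 x *
        exp ((r + r' - 2) * ψ0 + (r + r' - 2) * ψ1 * x) := by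
  simp only [selWeight_eq_logisticSel_mul_exp ψ0 ψ1 hr, selWeight_eq_logisticSel_mul_exp ψ0 ψ1 hr',
    selWeight_one]
  rw [show (r + r' - 2) * ψ0 + (r + r' - 2) * ψ1 * x =
    (r - 1) * (ψ0 + ψ1 * x) + (r' - 1) * (ψ0 + ψ1 * x) by ring, exp_add]
  ring

theorem cross_classified_normal_general
    (f : ℝ → ℝ) (μ σ2 ψ0 ψ1 : ℝ) (hσ2 : 0 < σ2)
    (P : ℝ → ℝ → ℝ)
    (hP : ∀ r r', P r r' = ∫ x, selWeight ψ0 ψ1 r x * selWeight ψ0 ψ1 r' x * f x)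
    (hPpos : ∀ r r', (r = 0 ∨ r = 1) → (r' = 0 ∨ r' = 1) → 0 < P r r')
    (hcond11 : ∀ x,
      selWeight ψ0 ψ1 1 x * selWeight ψ0 ψ1 1 x * f x / P 1 1 = normalPDF μ σ2 x) :
    ∀ r r' : ℝ, (r = 0 ∨ r = 1) → (r' = 0 ∨ r' = 1) → ∀ x,
      selWeight ψ0 ψ1 r x * selWeight ψ0 ψ1 r' x * f x / P r r' =
        normalPDF (μ + ψ1 * (r + r' - 2) * σ2) σ2 x := by
  intro r r' hr hr' x
  have hP11 : P 1 1 ≠ 0 := (hPpos 1 1 (Or.inr rfl) (Or.inr rfl)).ne'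
  have hnum : ∀ y, selWeight ψ0 ψ1 r y * selWeight ψ0 ψ1 r' y * f y =
      P 1 1 * normalPDF μ σ2 y * exp ((r + r' - 2) * ψ0 + (r + r' - 2) * ψ1 * y) := fun y ↦ by
    rw [selWeight_mul_selWeight ψ0 ψ1 hr hr', ← hcond11 y]
    field_simp
  rw [hP r r', div_integral_eq_normalPDF_of_eq_mul_exp hσ2 hP11 hnum]
  congr 1
  ring

/-- with two conditionally independent logistic indicators and
`X | R=1, R'=1 ~ N(μ,σ²)`, the conditional law of `X` given `R=r, R'=r'`
is `N(μ + ψ₁(r+r'−2)σ², σ²)`. -/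
theorem cross_classified_normal
    (f : ℝ → ℝ) (μ σ2 ψ0 ψ1 : ℝ) (hσ2 : 0 < σ2)
    (hf_nonneg : ∀ x, 0 ≤ f x) (hf_meas : Measurable f) (hInt : Integrable f)
    (P : ℝ → ℝ → ℝ)
    (hP : ∀ r r', P r r' = ∫ x, selWeight ψ0 ψ1 r x * selWeight ψ0 ψ1 r' x * f x)
    (hPpos : ∀ r r', (r = 0 ∨ r = 1) → (r' = 0 ∨ r' = 1) → 0 < P r r')
    (hcond11 : ∀ x,
      selWeight ψ0 ψ1 1 x * selWeight ψ0 ψ1 1 x * f x / P 1 1 = normalPDF μ σ2 x) :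
    ∀ r r' : ℝ, (r = 0 ∨ r = 1) → (r' = 0 ∨ r' = 1) → ∀ x,
      selWeight ψ0 ψ1 r x * selWeight ψ0 ψ1 r' x * f x / P r r' =
        normalPDF (μ + ψ1 * (r + r' - 2) * σ2) σ2 x :=
  cross_classified_normal_general f μ σ2 ψ0 ψ1 hσ2 P hP hPpos hcond11
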